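/- (Sum of limits) With P-probability 1 over sequences sampled from P: the limit lim_{t→∞} w(Q | x_{<t}) exists for every Q ∈ ℳ, and ∑_{Q∈ℳ} lim_{t→∞} w(Q | x_{<t}) = 1. -/

import Mathlib

/-!
The posterior is `w(Q) Q(x_{<t}) / ξ(x_{<t})`, where `ξ = ∑ w(Q) Q` is the Bayes mixture. Since
the alphabet is finite, the cylinders of length `t` are the atoms of the σ-algebra of the first
`t` coordinates, so `(w(Q) Q)(x_{<t}) / ξ(x_{<t})` is the conditional expectation of the density
`d(w(Q) Q)/dξ` given that σ-algebra. Lévy's upward theorem makes it converge `ξ`-a.s. to that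
density, and the densities of the summands of `ξ` add up to `dξ/dξ = 1`. Finally `P ≪ ξ`, so
`ξ`-a.s. statements hold `P`-a.s.
-/

open MeasureTheory Filter

/-- The cylinder set of infinite sequences agreeing with `x` on the first `t` coordinates,
i.e. the set of sequences beginning with the prefix `x_{<t}`. -/
def cyl {X : Type*} (x : ℕ → X) (t : ℕ) : Set (ℕ → X) := {y | ∀ i < t, y i = x i}

/-- `Q(x_{<t})`: the `Q`-measure of the cylinder set of sequences beginning with `x_{<t}`,
as a real number. -/
noncomputable def prefProb {X : Type*} [MeasurableSpace X]
    (Q : Measure (ℕ → X)) (x : ℕ → X) (t : ℕ) : ℝ :=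
  (Q (cyl x t)).toReal

/-- The posterior weight `w(Q i | x_{<t}) = w(Q i)·(Q i)(x_{<t}) / ∑_{j} w(Q j)·(Q j)(x_{<t})`. -/
noncomputable def post {X ι : Type*} [MeasurableSpace X]
    (w : ι → ℝ) (Q : ι → Measure (ℕ → X)) (i : ι) (x : ℕ → X) (t : ℕ) : ℝ :=
  w i * prefProb (Q i) x t / ∑' j, w j * prefProb (Q j) x t

open scoped ENNReal Topology

namespace MeasureTheory

namespace Measure

variable {α : Type*} [MeasurableSpace α]

theorem rnDeriv_ae_eq_div_singleton [Countable α] [MeasurableSingletonClass α]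
    (μ ν : Measure α) [IsFiniteMeasure ν] [μ.HaveLebesgueDecomposition ν] (hμν : μ ≪ ν) :
    ∀ᵐ a ∂ν, μ.rnDeriv ν a = μ {a} / ν {a} := by
  refine ae_iff_of_countable.2 fun a ha => ?_
  rw [ENNReal.eq_div_iff ha (measure_ne_top ν _), mul_comm, ← lintegral_singleton,
    setLIntegral_rnDeriv' hμν (measurableSet_singleton a)]

theorem tsum_rnDeriv_sum_ae_eq_one {ι : Type*} [Countable ι] (ν : ι → Measure α)
    [∀ i, SigmaFinite (ν i)] [SigmaFinite (sum ν)] :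
    ∀ᵐ a ∂(sum ν), ∑' i, (ν i).rnDeriv (sum ν) a = 1 := by
  have hdensity : (sum ν).withDensity (∑' i, (ν i).rnDeriv (sum ν)) = sum ν := by
    rw [withDensity_tsum fun i => measurable_rnDeriv _ _]
    exact congrArg sum (funext fun i =>
      withDensity_rnDeriv_eq _ _ (absolutelyContinuous_of_le (le_sum ν i)))
  have hmeas : Measurable (∑' i, (ν i).rnDeriv (sum ν)) :=
    Measurable.tsum' fun i => measurable_rnDeriv _ _
  have hae : ∑' i, (ν i).rnDeriv (sum ν) =ᵐ[sum ν] 1 :=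
    (withDensity_eq_iff_of_sigmaFinite hmeas.aemeasurable aemeasurable_const).1
      (hdensity.trans withDensity_one.symm)
  filter_upwards [hae] with a ha
  rwa [ENNReal.tsum_apply] at ha

theorem tsum_toReal_rnDeriv_sum_ae_eq_one {ι : Type*} [Countable ι] (ν : ι → Measure α)
    [∀ i, SigmaFinite (ν i)] [SigmaFinite (sum ν)] :
    ∀ᵐ a ∂(sum ν), ∑' i, ((ν i).rnDeriv (sum ν) a).toReal = 1 := by
  filter_upwards [tsum_rnDeriv_sum_ae_eq_one ν] with a ha
  have hfinite i : (ν i).rnDeriv (sum ν) a ≠ ∞ :=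
    ne_top_of_le_ne_top (ha ▸ ENNReal.one_ne_top) (ENNReal.le_tsum i)
  rw [← ENNReal.tsum_toReal_eq hfinite, ha, ENNReal.toReal_one]

end Measure

theorem condExp_toReal_rnDeriv_comap_ae_eq {Ω β : Type*} {mΩ : MeasurableSpace Ω}
    [MeasurableSpace β] [Countable β] [MeasurableSingletonClass β] {μ ν : Measure Ω}
    [IsFiniteMeasure μ] [IsFiniteMeasure ν] (hμν : μ ≪ ν) {g : Ω → β} (hg : Measurable g) :
    ν[fun a => (μ.rnDeriv ν a).toReal | MeasurableSpace.comap g inferInstance]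
      =ᵐ[ν] fun a => μ.real (g ⁻¹' {g a}) / ν.real (g ⁻¹' {g a}) := by
  have hmap : ∀ᵐ a ∂ν, (μ.map g).rnDeriv (ν.map g) (g a) = μ.map g {g a} / ν.map g {g a} :=
    ae_of_ae_map hg.aemeasurable (Measure.rnDeriv_ae_eq_div_singleton _ _ (hμν.map hg))
  filter_upwards [(toReal_rnDeriv_map hμν hg).symm, hmap] with a hcond hratio
  rw [hcond, hratio, Measure.map_apply hg (measurableSet_singleton _),
    Measure.map_apply hg (measurableSet_singleton _), ENNReal.toReal_div, measureReal_def,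
    measureReal_def]

end MeasureTheory

section Truncate

variable {X : Type*}

def truncate (X : Type*) (t : ℕ) (y : ℕ → X) : Fin t → X := fun i => y i

theorem measurable_truncate [MeasurableSpace X] (t : ℕ) : Measurable (truncate X t) :=
  measurable_pi_lambda _ fun _ => measurable_pi_apply _

theorem cyl_eq_preimage_truncate (x : ℕ → X) (t : ℕ) :
    cyl x t = truncate X t ⁻¹' {truncate X t x} := by
  ext y
  simp only [cyl, truncate, Set.mem_ofPred_eq, Set.mem_preimage, Set.mem_singleton_iff,
    funext_iff, Fin.forall_iff]

theorem measurableSet_cyl [MeasurableSpace X] [MeasurableSingletonClass X] (x : ℕ → X) (t : ℕ) :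
    MeasurableSet (cyl x t) := by
  rw [cyl_eq_preimage_truncate]
  exact measurable_truncate t (measurableSet_singleton _)

def truncateFiltration (X : Type*) [MeasurableSpace X] :
    Filtration ℕ (MeasurableSpace.pi : MeasurableSpace (ℕ → X)) where
  seq t := MeasurableSpace.comap (truncate X t) inferInstance
  mono' s t hst := by
    have : truncate X s = (fun v i => v (Fin.castLE hst i)) ∘ truncate X t := rfl
    simp only [this, ← MeasurableSpace.comap_comp]
    exact MeasurableSpace.comap_mono (Measurable.comap_le (by fun_prop))
  le' t := (measurable_truncate t).comap_le

theorem iSup_truncateFiltration [MeasurableSpace X] :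
    ⨆ t, truncateFiltration X t = MeasurableSpace.pi := by
  refine le_antisymm (iSup_le (truncateFiltration X).le) (iSup_le fun i => ?_)
  have : (fun y : ℕ → X => y i) = (fun v => v (Fin.last i)) ∘ truncate X (i + 1) := rfl
  rw [this, ← MeasurableSpace.comap_comp]
  exact (MeasurableSpace.comap_mono (Measurable.comap_le (by fun_prop))).trans
    (le_iSup (truncateFiltration X) (i + 1))

theorem tendsto_measureReal_cyl_div_ae [Finite X] [MeasurableSpace X]
    [MeasurableSingletonClass X] {μ ν : Measure (ℕ → X)} [IsFiniteMeasure μ] [IsFiniteMeasure ν]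
    (hμν : μ ≪ ν) :
    ∀ᵐ x ∂ν, Tendsto (fun t => μ.real (cyl x t) / ν.real (cyl x t)) atTop
      (𝓝 (μ.rnDeriv ν x).toReal) := by
  have hlevy := Measure.integrable_toReal_rnDeriv.tendsto_ae_condExp
    (ℱ := truncateFiltration X) (by
      rw [iSup_truncateFiltration]
      exact (Measure.measurable_rnDeriv μ ν).ennreal_toReal.stronglyMeasurable)
  have hratio := ae_all_iff.2 fun t =>
    condExp_toReal_rnDeriv_comap_ae_eq hμν (measurable_truncate (X := X) t)
  filter_upwards [hlevy, hratio] with x hx hr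
  simpa only [cyl_eq_preimage_truncate] using hx.congr hr

end Truncate

section Mixture

variable {ι Ω : Type*} [MeasurableSpace Ω] {w : ι → ℝ} {Q : ι → Measure Ω}

-- With `ℝ≥0` weights every summand is an `IsFiniteMeasure` instance.
noncomputable abbrev bayesMixture (w : ι → ℝ) (Q : ι → Measure Ω) : Measure Ω :=
  Measure.sum fun i => (w i).toNNReal • Q i

variable (w Q) in
theorem le_bayesMixture (i : ι) : (w i).toNNReal • Q i ≤ bayesMixture w Q :=
  Measure.le_sum (fun j => (w j).toNNReal • Q j) i

theorem absolutelyContinuous_bayesMixture {i : ι} (hw : 0 < w i) : Q i ≪ bayesMixture w Q :=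
  (Measure.absolutelyContinuous_smul (by simpa using hw)).trans
    (Measure.absolutelyContinuous_of_le (le_bayesMixture w Q i))

theorem isProbabilityMeasure_bayesMixture [∀ i, IsProbabilityMeasure (Q i)]
    (hw : ∀ i, 0 ≤ w i) (hw1 : ∑' i, w i = 1) : IsProbabilityMeasure (bayesMixture w Q) := by
  have hsummable : Summable w := by
    by_contra h
    simp [tsum_eq_zero_of_not_summable h] at hw1
  constructor
  rw [bayesMixture, Measure.sum_apply _ MeasurableSet.univ]
  simp only [Measure.smul_apply, measure_univ, ENNReal.smul_def, smul_eq_mul, mul_one]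
  change ∑' i, ENNReal.ofReal (w i) = 1
  rw [← ENNReal.ofReal_tsum_of_nonneg hw hsummable, hw1, ENNReal.ofReal_one]

end Mixture

theorem post_eq_measureReal_div {X ι : Type*} [MeasurableSpace X] [MeasurableSingletonClass X]
    {w : ι → ℝ} (hw : ∀ i, 0 ≤ w i) {Q : ι → Measure (ℕ → X)} [∀ i, IsFiniteMeasure (Q i)]
    (i : ι) (x : ℕ → X) (t : ℕ) :
    post w Q i x t =
      ((w i).toNNReal • Q i).real (cyl x t) / (bayesMixture w Q).real (cyl x t) := by
  have hterm j : ((w j).toNNReal • Q j).real (cyl x t) = w j * prefProb (Q j) x t := by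
    simp [Measure.real, prefProb, hw j]
  rw [post, hterm, bayesMixture, measureReal_def, Measure.sum_apply _ (measurableSet_cyl x t),
    ENNReal.tsum_toReal_eq fun j => measure_ne_top _ _]
  simp only [← measureReal_def, hterm]

theorem sum_of_limits_general
    {X : Type*} [Fintype X] [MeasurableSpace X] [MeasurableSingletonClass X]
    {ι : Type*} [Countable ι]
    (Q : ι → Measure (ℕ → X)) (hQ : ∀ i, IsProbabilityMeasure (Q i))
    (w : ι → ℝ) (hw : ∀ i, 0 < w i) (hw1 : ∑' i, w i = 1)
    (i₀ : ι) :
    ∀ᵐ x ∂(Q i₀), ∃ L : ι → ℝ,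
      (∀ i : ι, Tendsto (fun t => post w Q i x t) atTop (nhds (L i))) ∧
      ∑' i, L i = 1 := by
  have hw0 i : 0 ≤ w i := (hw i).le
  have := isProbabilityMeasure_bayesMixture (Q := Q) hw0 hw1
  set ν : ι → Measure (ℕ → X) := fun i => (w i).toNNReal • Q i
  have hlim := ae_all_iff.2 fun i =>
    tendsto_measureReal_cyl_div_ae (Measure.absolutelyContinuous_of_le (le_bayesMixture w Q i))
  refine (absolutelyContinuous_bayesMixture (hw i₀)).ae_le ?_
  filter_upwards [hlim, Measure.tsum_toReal_rnDeriv_sum_ae_eq_one ν] with x hx hsum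
  refine ⟨fun i => ((ν i).rnDeriv (bayesMixture w Q) x).toReal, fun i => ?_, hsum⟩
  simpa only [post_eq_measureReal_div hw0] using hx i

/-- **Sum of limits.** With probability 1 over sequences sampled from the true measure
`P = Q i₀ ∈ ℳ`: the limit `lim_{t→∞} w(Q | x_{<t})` exists for every `Q ∈ ℳ`, and the sum
over `Q ∈ ℳ` of these limits equals 1. -/
theorem sum_of_limits
    {X : Type*} [Fintype X] [Nonempty X] [MeasurableSpace X] [MeasurableSingletonClass X]
    {ι : Type*} [Countable ι]
    (Q : ι → Measure (ℕ → X)) (hQ : ∀ i, IsProbabilityMeasure (Q i))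
    (w : ι → ℝ) (hw : ∀ i, 0 < w i) (hw1 : ∑' i, w i = 1)
    (i₀ : ι) :
    ∀ᵐ x ∂(Q i₀), ∃ L : ι → ℝ,
      (∀ i : ι, Tendsto (fun t => post w Q i x t) atTop (nhds (L i))) ∧
      ∑' i, L i = 1 :=
  sum_of_limits_general Q hQ w hw hw1 i₀
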